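/- arXiv:0910.5187 — 4 statements merged into one kernel-verified Lean document; each statement's English description precedes it below -/
import Mathlib

section
/- Suppose y : ℝ → ℝ is continuous, 2π-periodic, and strictly positive, and β > 0 satisfies both ∫₀^{2π} (1/y(x)^2 - 1/y(x)^3) dx = 0 and ∫₀^{2π} (1/y(x)^2 - 1/y(x)^3) cos(x) dx = πβ. Then β ≤ 8/27. -/
/-!
With `t = 1 / y`, the integrand `1 / y ^ 2 - 1 / y ^ 3 = t ^ 2 - t ^ 3` is at most `4 / 27`
(the maximum of `t ^ 2 - t ^ 3` on `t ≥ 0`, attained at `t = 2 / 3`). Adding the two identities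
gives `∫₀^{2π} (1 / y ^ 2 - 1 / y ^ 3) (1 + cos x) dx = π β`, and since the weight `1 + cos x` is
nonnegative with integral `2π`, the left side is at most `2π · 4 / 27`.
-/

open Real intervalIntegral

lemma sq_sub_pow_three_le {t : ℝ} (ht : 0 ≤ t) : t ^ 2 - t ^ 3 ≤ 4 / 27 := by
  nlinarith [mul_nonneg (sq_nonneg (t - 2 / 3)) (by linarith : 0 ≤ 3 * t + 1)]

lemma one_div_sq_sub_one_div_pow_three_le {y : ℝ} (hy : 0 ≤ y) :
    1 / y ^ 2 - 1 / y ^ 3 ≤ 4 / 27 := by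
  simpa only [one_div, inv_pow] using sq_sub_pow_three_le (inv_nonneg.mpr hy)

lemma integral_one_add_cos_zero_two_pi : ∫ x in (0 : ℝ)..(2 * π), (1 + cos x) = 2 * π := by
  rw [integral_add intervalIntegrable_const (continuous_cos.intervalIntegrable _ _)]
  simp

lemma integral_mul_one_add_cos_le {f : ℝ → ℝ} {M : ℝ}
    (hf : IntervalIntegrable f MeasureTheory.volume 0 (2 * π))
    (hM : ∀ x ∈ Set.Icc 0 (2 * π), f x ≤ M) :
    ∫ x in (0 : ℝ)..(2 * π), f x * (1 + cos x) ≤ 2 * π * M := by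
  have hweight : Continuous fun x => 1 + cos x := by fun_prop
  calc ∫ x in (0 : ℝ)..(2 * π), f x * (1 + cos x)
      ≤ ∫ x in (0 : ℝ)..(2 * π), M * (1 + cos x) := by
        refine integral_mono_on (by positivity) (hf.mul_continuousOn hweight.continuousOn)
          (hweight.intervalIntegrable _ _ |>.const_mul M) fun x hx => ?_
        exact mul_le_mul_of_nonneg_right (hM x hx) (by linarith [neg_one_le_cos x])
    _ = 2 * π * M := by
        rw [integral_const_mul, integral_one_add_cos_zero_two_pi, mul_comm]

theorem beta_le_eight_div_27_general (y : ℝ → ℝ) (β : ℝ)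
    (hy_cont : Continuous y)
    (hy_pos : ∀ x, 0 < y x)
    (h1 : ∫ x in (0 : ℝ)..(2 * π), (1 / (y x) ^ 2 - 1 / (y x) ^ 3) = 0)
    (h2 : ∫ x in (0 : ℝ)..(2 * π), (1 / (y x) ^ 2 - 1 / (y x) ^ 3) * Real.cos x = π * β) :
    β ≤ 8 / 27 := by
  have hg : Continuous fun x => 1 / y x ^ 2 - 1 / y x ^ 3 := by
    fun_prop (disch := exact fun x => pow_ne_zero _ (hy_pos x).ne')
  have hg_cos : Continuous fun x => (1 / y x ^ 2 - 1 / y x ^ 3) * cos x := hg.mul continuous_cos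
  have hsum : ∫ x in (0 : ℝ)..(2 * π), (1 / y x ^ 2 - 1 / y x ^ 3) * (1 + cos x) = π * β := by
    simp_rw [mul_one_add]
    rw [integral_add (hg.intervalIntegrable _ _) (hg_cos.intervalIntegrable _ _), h1, h2, zero_add]
  have hbound : π * β ≤ π * (8 / 27) := by
    have := integral_mul_one_add_cos_le (hg.intervalIntegrable 0 (2 * π))
      fun x _ => one_div_sq_sub_one_div_pow_three_le (hy_pos x).le
    linarith
  exact le_of_mul_le_mul_left hbound pi_pos

theorem beta_le_eight_div_27 (y : ℝ → ℝ) (β : ℝ)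
    (hy_cont : Continuous y)
    (hy_per : ∀ x, y (x + 2 * π) = y x)
    (hy_pos : ∀ x, 0 < y x)
    (hβ : 0 < β)
    (h1 : ∫ x in (0 : ℝ)..(2 * π), (1 / (y x) ^ 2 - 1 / (y x) ^ 3) = 0)
    (h2 : ∫ x in (0 : ℝ)..(2 * π), (1 / (y x) ^ 2 - 1 / (y x) ^ 3) * Real.cos x = π * β) :
    β ≤ 8 / 27 :=
  beta_le_eight_div_27_general y β hy_cont hy_pos h1 h2
end

section
/- There is no strictly positive 2π-periodic C³ solution h of h - (μ/3) h³ cos(x) + (χ/3) h³ (h' + h''') = q when q > (2/3)√(2/μ), where μ > 0 and χ ≥ 0. -/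
/-!
Divide the equation by `h³`: `h⁻² - q h⁻³ = (μ/3) cos x - (χ/3)(h' + h''')`. The weight `1 + cos x`
is nonnegative and is annihilated by `∂ + ∂³`, so after multiplying by it and integrating over a
period the `χ`-term vanishes by periodicity, leaving `μπ/3` on the right. On the left,
`t⁻² - q t⁻³ ≤ 4/(27q²)` for `t > 0`, and `∫ (1 + cos) = 2π`; hence `μ q² ≤ 8/9`, which is
exactly the negation of `q > (2/3)√(2/μ)`.
-/

open Real

theorem Function.Periodic.deriv {𝕜 F : Type*} [NontriviallyNormedField 𝕜] [NormedAddCommGroup F]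
    [NormedSpace 𝕜 F] {f : 𝕜 → F} {c : 𝕜} (hf : Function.Periodic f c) :
    Function.Periodic (deriv f) c := fun x => by
  rw [← deriv_comp_add_const, hf.funext]

/-- The maximum of `t ↦ t⁻² - q t⁻³` on `t > 0` is attained at `t = 3q/2`. -/
theorem one_div_sq_sub_div_cube_le {t q : ℝ} (ht : 0 < t) (hq : 0 < q) :
    1 / t ^ 2 - q / t ^ 3 ≤ 4 / (27 * q ^ 2) := by
  rw [div_sub_div _ _ (by positivity) (by positivity),
    div_le_div_iff₀ (by positivity) (by positivity)]
  nlinarith [mul_nonneg (sq_nonneg (2 * t - 3 * q)) (by positivity : (0:ℝ) ≤ t + 3 * q),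
    sq_nonneg t, sq_nonneg q]

theorem integral_one_add_cos_mul_cos : ∫ x in (0:ℝ)..2 * π, (1 + cos x) * cos x = π := by
  simp only [add_mul, one_mul, ← sq]
  rw [intervalIntegral.integral_add (continuous_cos.intervalIntegrable _ _)
    ((continuous_cos.pow 2).intervalIntegrable _ _) (g := fun x => cos x ^ 2), integral_cos,
    integral_cos_sq]
  simp

theorem integral_one_add_cos : ∫ x in (0:ℝ)..2 * π, (1 + cos x) = 2 * π := by
  rw [intervalIntegral.integral_add intervalIntegrable_const
    (continuous_cos.intervalIntegrable _ _), integral_cos]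
  simp

theorem hasDerivAt_one_add_cos_mul_deriv_add_third_deriv {f : ℝ → ℝ} {x : ℝ}
    (hf : DifferentiableAt ℝ f x) (hf' : DifferentiableAt ℝ (deriv f) x)
    (hf'' : DifferentiableAt ℝ (deriv (deriv f)) x) :
    HasDerivAt
      (fun y => (1 + cos y) * (f y + deriv (deriv f) y) + sin y * deriv f y - cos y * f y)
      ((1 + cos x) * (deriv f x + deriv (deriv (deriv f)) x)) x := by
  refine ((((hasDerivAt_cos x).const_add 1).mul (hf.hasDerivAt.add hf''.hasDerivAt)).add
    ((hasDerivAt_sin x).mul hf'.hasDerivAt)).sub ((hasDerivAt_cos x).mul hf.hasDerivAt)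
    |>.congr_deriv ?_
  simp only [Pi.add_apply]
  ring

theorem integral_one_add_cos_mul_deriv_add_third_deriv_eq_zero {f : ℝ → ℝ}
    (hf : ContDiff ℝ 3 f) (hper : Function.Periodic f (2 * π)) :
    ∫ x in (0:ℝ)..2 * π, (1 + cos x) * (deriv f x + deriv (deriv (deriv f)) x) = 0 := by
  have hf' : ContDiff ℝ 2 (deriv f) := hf.deriv'
  have hf'' : ContDiff ℝ 1 (deriv (deriv f)) := hf'.deriv'
  rw [intervalIntegral.integral_eq_sub_of_hasDerivAt
    (fun x _ => hasDerivAt_one_add_cos_mul_deriv_add_third_deriv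
      (hf.differentiable (by norm_num) x) (hf'.differentiable (by norm_num) x)
      (hf''.differentiable (by norm_num) x))
    (by apply Continuous.intervalIntegrable; fun_prop)]
  simp [hper.eq, hper.deriv.deriv.eq]

theorem mul_sq_le_of_steady_state {μ χ q : ℝ} {h : ℝ → ℝ} (hq : 0 < q) (hh : ContDiff ℝ 3 h)
    (hper : Function.Periodic h (2 * π)) (hpos : ∀ x, 0 < h x)
    (heq : ∀ x, h x - (μ / 3) * (h x) ^ 3 * cos x
      + (χ / 3) * (h x) ^ 3 * (deriv h x + deriv (deriv (deriv h)) x) = q) :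
    μ * q ^ 2 ≤ 8 / 9 := by
  have hdiv : ∀ x, 1 / h x ^ 2 - q / h x ^ 3
      = μ / 3 * cos x - χ / 3 * (deriv h x + deriv (deriv (deriv h)) x) := fun x => by
    rw [← heq x]
    field_simp [(hpos x).ne']
    ring
  have h1 : Continuous (deriv h) := hh.continuous_deriv (by norm_num)
  have h3 : Continuous (deriv (deriv (deriv h))) := hh.deriv'.deriv'.continuous_deriv_one
  have hweighted : ∫ x in (0:ℝ)..2 * π, (1 + cos x) * (1 / h x ^ 2 - q / h x ^ 3) = μ * π / 3 := by
    simp only [hdiv, mul_sub, mul_left_comm (1 + cos _)]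
    rw [intervalIntegral.integral_sub (by apply Continuous.intervalIntegrable; fun_prop)
      (by apply Continuous.intervalIntegrable; fun_prop),
      intervalIntegral.integral_const_mul, intervalIntegral.integral_const_mul,
      integral_one_add_cos_mul_cos, integral_one_add_cos_mul_deriv_add_third_deriv_eq_zero hh hper]
    ring
  have hbound : μ * π / 3 ≤ 2 * π * (4 / (27 * q ^ 2)) := calc
    μ * π / 3 = ∫ x in (0:ℝ)..2 * π, (1 + cos x) * (1 / h x ^ 2 - q / h x ^ 3) := hweighted.symm
    _ ≤ ∫ x in (0:ℝ)..2 * π, (1 + cos x) * (4 / (27 * q ^ 2)) := by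
      have := hh.continuous
      refine intervalIntegral.integral_mono_on (by positivity) ?_ ?_ fun x _ =>
        mul_le_mul_of_nonneg_left (one_div_sq_sub_div_cube_le (hpos x) hq)
          (by linarith [neg_one_le_cos x])
      · apply Continuous.intervalIntegrable
        fun_prop (disch := exact fun x => pow_ne_zero _ (hpos x).ne')
      · apply Continuous.intervalIntegrable; fun_prop
    _ = 2 * π * (4 / (27 * q ^ 2)) := by
      rw [intervalIntegral.integral_mul_const, integral_one_add_cos]
  have hscaled : μ * q ^ 2 * π ≤ 8 / 9 * π := calc
    μ * q ^ 2 * π = 3 * q ^ 2 * (μ * π / 3) := by ring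
    _ ≤ 3 * q ^ 2 * (2 * π * (4 / (27 * q ^ 2))) := by gcongr
    _ = 8 / 9 * π := by field_simp; ring
  exact le_of_mul_le_mul_right hscaled pi_pos

theorem no_positive_steady_state_general (μ χ q : ℝ) (hμ : 0 < μ)
    (hq : q > (2 / 3) * Real.sqrt (2 / μ)) :
    ¬ ∃ h : ℝ → ℝ, ContDiff ℝ 3 h ∧ (∀ x, h (x + 2 * π) = h x) ∧ (∀ x, 0 < h x) ∧
      (∀ x, h x - (μ / 3) * (h x) ^ 3 * Real.cos x
          + (χ / 3) * (h x) ^ 3 * (deriv h x + deriv (deriv (deriv h)) x) = q) := by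
  rintro ⟨h, hh, hper, hpos, heq⟩
  have hq0 : 0 < q := lt_of_le_of_lt (by positivity) hq
  have hsq : (2 / 3) ^ 2 * (2 / μ) < q ^ 2 := by
    have := pow_lt_pow_left₀ hq (by positivity) two_ne_zero
    rwa [mul_pow, sq_sqrt (by positivity)] at this
  have hgt : 8 / 9 < μ * q ^ 2 := by
    rw [show (2 / 3) ^ 2 * (2 / μ) = 8 / 9 / μ by ring, div_lt_iff₀ hμ] at hsq
    linarith
  exact hgt.not_ge (mul_sq_le_of_steady_state hq0 hh hper hpos heq)

theorem no_positive_steady_state (μ χ q : ℝ) (hμ : 0 < μ) (hχ : 0 ≤ χ)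
    (hq : q > (2 / 3) * Real.sqrt (2 / μ)) :
    ¬ ∃ h : ℝ → ℝ, ContDiff ℝ 3 h ∧ (∀ x, h (x + 2 * π) = h x) ∧ (∀ x, 0 < h x) ∧
      (∀ x, h x - (μ / 3) * (h x) ^ 3 * Real.cos x
          + (χ / 3) * (h x) ^ 3 * (deriv h x + deriv (deriv (deriv h)) x) = q) :=
  no_positive_steady_state_general μ χ q hμ hq
end

section
/- Let F_ε(z) = -z²/4 + (ε/6)z - (ε²/6) ln(z + ε). If 0 < ε < (√33 - 3)/4, then |F_ε(z)| ≤ z²/2 + 3/5 for all z ≥ 0. -/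
/-!
Upper bound: `log (z + ε) ≥ 1 - 1/(z + ε)` gives `-ε² log (z + ε) ≤ ε - ε²`, and what remains is a
quadratic in `z` with no real root. Lower bound: `log x ≤ x - 1` leaves, for `ε ≤ 1`, a sum of
nonnegative terms.
-/

open Real

noncomputable def Feps (ε z : ℝ) : ℝ :=
  -(z ^ 2) / 4 + ε / 6 * z - ε ^ 2 / 6 * log (z + ε)

lemma neg_sq_mul_log_le {ε x : ℝ} (hε : 0 < ε) (hx : ε ≤ x) :
    -(ε ^ 2 * log x) ≤ ε - ε ^ 2 := by
  have hx₀ : 0 < x := hε.trans_le hx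
  have hlog : 1 - x⁻¹ ≤ log x := one_sub_inv_le_log_of_pos hx₀
  have hinv : ε ^ 2 * x⁻¹ ≤ ε := by
    rw [← div_eq_mul_inv, div_le_iff₀ hx₀]
    nlinarith
  nlinarith [mul_le_mul_of_nonneg_left hlog (sq_nonneg ε)]

lemma Feps_le {ε z : ℝ} (hε : 0 < ε) (hz : 0 ≤ z) : Feps ε z ≤ z ^ 2 / 2 + 3 / 5 := by
  have hlog := neg_sq_mul_log_le hε (le_add_of_nonneg_left hz)
  unfold Feps
  nlinarith [sq_nonneg (z - ε / 9), sq_nonneg (ε - 1 / 2)]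

lemma neg_le_Feps {ε z : ℝ} (hε : 0 < ε) (hε₁ : ε ≤ 1) (hz : 0 ≤ z) :
    -(z ^ 2 / 2 + 3 / 5) ≤ Feps ε z := by
  have hlog : log (z + ε) ≤ z + ε - 1 := log_le_sub_one_of_pos (by positivity)
  have hcoef : 0 ≤ ε - ε ^ 2 := by nlinarith
  unfold Feps
  nlinarith [mul_le_mul_of_nonneg_left hlog (sq_nonneg ε), mul_nonneg hcoef hz,
    mul_nonneg (sq_nonneg ε) (sub_nonneg.2 hε₁)]

theorem F_eps_bound (ε : ℝ) (hε : 0 < ε) (hε' : ε < (Real.sqrt 33 - 3) / 4)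
    (z : ℝ) (hz : 0 ≤ z) :
    |(-(z ^ 2) / 4 + ε / 6 * z - ε ^ 2 / 6 * Real.log (z + ε))| ≤ z ^ 2 / 2 + 3 / 5 := by
  have hε₁ : ε ≤ 1 := by
    have : √33 < 7 := (sqrt_lt' (by norm_num)).2 (by norm_num)
    linarith
  exact abs_le.2 ⟨neg_le_Feps hε hε₁ hz, Feps_le hε hz⟩
end

section
/- Linear Grönwall with maximum: suppose v : [0, T] → [0, ∞) is continuous, A ≥ 0, B : [0, T] → [0, ∞) is integrable, and v(T') ≤ v(0) + ∫₀^{T'} B(t) max{A, v(t)} dt for all T' ∈ [0, T]. Then v(T) ≤ max{A, v(0)} exp(∫₀^T B(t) dt). -/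
/-!
Put `w = max A v` and `β = ∫₀ᵀ B`; then `w ≤ max A (v 0) + ∫₀ᵗ B w`. Cut `[0, T]` into `n` pieces
each carrying `B`-mass `δ = β / n < 1`. On a piece `[a, b]`, bounding `w` by its maximum there
turns `w ≤ K + ∫ₐᵗ B w` into `K + ∫ₐᵇ B w ≤ K / (1 - δ)`, the constant with which the next piece
starts. Hence `w T ≤ max A (v 0) / (1 - β / n) ^ n`, which tends to `max A (v 0) * exp β`.
-/

open Real MeasureTheory intervalIntegral Filter Set

section Gronwall

variable {B w f : ℝ → ℝ} {a b c K K' δ : ℝ}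

lemma exists_mem_Icc_integral_eq (hab : a ≤ b) (hB : IntervalIntegrable B volume a b)
    {y : ℝ} (hy : y ∈ Icc 0 (∫ s in a..b, B s)) : ∃ c ∈ Icc a b, ∫ s in a..c, B s = y := by
  have hcont := continuousOn_primitive_interval' hB left_mem_uIcc
  rw [uIcc_of_le hab] at hcont
  simpa using intermediate_value_Icc hab hcont (by simpa using hy)

lemma add_integral_le_of_le_add_integral (hf : IntervalIntegrable f volume a b)
    (h : ∀ t ∈ Icc a b, w t ≤ K + ∫ s in a..t, f s) (hc : c ∈ Icc a b)
    (hK : K + ∫ s in a..c, f s ≤ K') :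
    ∀ t ∈ Icc c b, w t ≤ K' + ∫ s in c..t, f s := by
  intro t ht
  have hsplit := integral_add_adjacent_intervals
    (hf.mono_set (uIcc_subset_uIcc left_mem_uIcc (Icc_subset_uIcc hc)))
    (hf.mono_set (uIcc_subset_uIcc (Icc_subset_uIcc hc)
      (Icc_subset_uIcc ⟨hc.1.trans ht.1, ht.2⟩)))
  linarith [h t ⟨hc.1.trans ht.1, ht.2⟩]

lemma add_integral_mul_le_div_one_sub (hab : a ≤ b) (hB : IntervalIntegrable B volume a b)
    (hB0 : ∀ t ∈ Icc a b, 0 ≤ B t) (hw : ContinuousOn w (Icc a b))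
    (hw0 : ∀ t ∈ Icc a b, 0 ≤ w t) (hδ : ∫ s in a..b, B s ≤ δ) (hδ0 : 0 ≤ δ) (hδ1 : δ < 1)
    (h : ∀ t ∈ Icc a b, w t ≤ K + ∫ s in a..t, B s * w s) :
    K + ∫ s in a..b, B s * w s ≤ K / (1 - δ) := by
  obtain ⟨t₀, ht₀, hmax⟩ := isCompact_Icc.exists_isMaxOn (nonempty_Icc.2 hab) hw
  have hbound : ∀ t ∈ Icc a b, ∫ s in a..t, B s * w s ≤ δ * w t₀ := by
    intro t ht
    have hBt : IntervalIntegrable B volume a t :=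
      hB.mono_set (uIcc_subset_uIcc left_mem_uIcc (Icc_subset_uIcc ht))
    have hwt : ContinuousOn w (uIcc a t) := by
      rw [uIcc_of_le ht.1]
      exact hw.mono (Icc_subset_Icc_right ht.2)
    calc ∫ s in a..t, B s * w s ≤ ∫ s in a..t, B s * w t₀ :=
          integral_mono_on ht.1 (hBt.mul_continuousOn hwt) (hBt.mul_const _) fun s hs =>
            mul_le_mul_of_nonneg_left (hmax ⟨hs.1, hs.2.trans ht.2⟩)
              (hB0 s ⟨hs.1, hs.2.trans ht.2⟩)
      _ = (∫ s in a..t, B s) * w t₀ := integral_mul_const _ _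
      _ ≤ (∫ s in a..b, B s) * w t₀ := by
          refine mul_le_mul_of_nonneg_right (integral_mono_interval le_rfl ht.1 ht.2 ?_ hB)
            (hw0 t₀ ht₀)
          exact (ae_restrict_iff' measurableSet_Ioc).2
            (Eventually.of_forall fun s hs => hB0 s (Ioc_subset_Icc_self hs))
      _ ≤ δ * w t₀ := mul_le_mul_of_nonneg_right hδ (hw0 t₀ ht₀)
  have hmax_le : w t₀ * (1 - δ) ≤ K := by linarith [h t₀ ht₀, hbound t₀ ht₀]
  rw [le_div_iff₀ (by linarith)]
  nlinarith [hbound b ⟨hab, le_rfl⟩, mul_le_mul_of_nonneg_left hmax_le hδ0]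

lemma le_div_one_sub_pow_of_le_add_integral (hB : IntervalIntegrable B volume a b)
    (hB0 : ∀ t ∈ Icc a b, 0 ≤ B t) (hw : ContinuousOn w (Icc a b))
    (hw0 : ∀ t ∈ Icc a b, 0 ≤ w t) (hδ0 : 0 ≤ δ) (hδ1 : δ < 1) (n : ℕ) :
    ∀ c ∈ Icc a b, ∀ K : ℝ, (∀ t ∈ Icc c b, w t ≤ K + ∫ s in c..t, B s * w s) →
      ∫ s in c..b, B s = n * δ → w b ≤ K / (1 - δ) ^ n := by
  induction n with
  | zero =>
    intro c hc K h hβ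
    have hstep := add_integral_mul_le_div_one_sub hc.2
      (hB.mono_set (uIcc_subset_uIcc (Icc_subset_uIcc hc) right_mem_uIcc))
      (fun t ht => hB0 t ⟨hc.1.trans ht.1, ht.2⟩) (hw.mono (Icc_subset_Icc_left hc.1))
      (fun t ht => hw0 t ⟨hc.1.trans ht.1, ht.2⟩) (by simp [hβ]) le_rfl one_pos h
    simpa using (h b ⟨hc.2, le_rfl⟩).trans hstep
  | succ n ih =>
    intro c hc K h hβ
    have hBc : IntervalIntegrable B volume c b :=
      hB.mono_set (uIcc_subset_uIcc (Icc_subset_uIcc hc) right_mem_uIcc)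
    obtain ⟨d, hd, hBd⟩ := exists_mem_Icc_integral_eq hc.2 hBc (y := δ) ⟨hδ0, by
      rw [hβ]; push_cast; nlinarith⟩
    have hcd : Icc c d ⊆ Icc a b := Icc_subset_Icc hc.1 hd.2
    have hBcd := hBc.mono_set (uIcc_subset_uIcc left_mem_uIcc (Icc_subset_uIcc hd))
    have hBdb := hBc.mono_set (uIcc_subset_uIcc (Icc_subset_uIcc hd) right_mem_uIcc)
    have hstep := add_integral_mul_le_div_one_sub hd.1 hBcd (fun t ht => hB0 t (hcd ht))
      (hw.mono hcd) (fun t ht => hw0 t (hcd ht)) hBd.le hδ0 hδ1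
      (fun t ht => h t ⟨ht.1, ht.2.trans hd.2⟩)
    have hrestart := add_integral_le_of_le_add_integral
      (hBc.mul_continuousOn (by rw [uIcc_of_le hc.2]; exact hw.mono (Icc_subset_Icc_left hc.1)))
      h hd hstep
    have hβd : ∫ s in d..b, B s = n * δ := by
      have := integral_add_adjacent_intervals hBcd hBdb
      push_cast at hβ
      linarith
    calc w b ≤ K / (1 - δ) / (1 - δ) ^ n :=
          ih d ⟨hc.1.trans hd.1, hd.2⟩ _ hrestart hβd
      _ = K / (1 - δ) ^ (n + 1) := by rw [div_div, ← pow_succ']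

lemma le_mul_exp_of_eventually_le_div_one_sub_pow {x C β : ℝ}
    (h : ∀ᶠ n : ℕ in atTop, x ≤ C / (1 - β / n) ^ n) : x ≤ C * exp β := by
  have hpow : Tendsto (fun n : ℕ => (1 - β / n) ^ n) atTop (nhds (exp (-β))) := by
    simpa [sub_eq_add_neg, neg_div] using tendsto_one_add_div_pow_exp (-β)
  have hlim := tendsto_const_nhds (x := C).div hpow (exp_ne_zero _)
  rw [exp_neg, div_inv_eq_mul] at hlim
  exact ge_of_tendsto hlim h

theorem le_mul_exp_integral_of_le_add_integral (hab : a ≤ b)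
    (hB : IntervalIntegrable B volume a b) (hB0 : ∀ t ∈ Icc a b, 0 ≤ B t)
    (hw : ContinuousOn w (Icc a b)) (hw0 : ∀ t ∈ Icc a b, 0 ≤ w t)
    (h : ∀ t ∈ Icc a b, w t ≤ K + ∫ s in a..t, B s * w s) :
    w b ≤ K * exp (∫ s in a..b, B s) := by
  set β := ∫ s in a..b, B s
  have hβ0 : 0 ≤ β := integral_nonneg hab hB0
  refine le_mul_exp_of_eventually_le_div_one_sub_pow ?_
  filter_upwards [tendsto_natCast_atTop_atTop.eventually_gt_atTop β] with n hn
  have hn0 : (0 : ℝ) < n := hβ0.trans_lt hn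
  exact le_div_one_sub_pow_of_le_add_integral hB hB0 hw hw0 (div_nonneg hβ0 hn0.le)
    ((div_lt_one hn0).2 hn) n a (left_mem_Icc.2 hab) K h (mul_div_cancel₀ β hn0.ne').symm

end Gronwall

theorem linear_gronwall_max_general (T A : ℝ) (hT : 0 ≤ T) (hA : 0 ≤ A)
    (v B : ℝ → ℝ)
    (hcont : ContinuousOn v (Set.Icc 0 T))
    (hBnonneg : ∀ t ∈ Set.Icc 0 T, 0 ≤ B t)
    (hBint : IntervalIntegrable B volume 0 T)
    (hineq : ∀ T' ∈ Set.Icc 0 T,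
      v T' ≤ v 0 + ∫ t in (0 : ℝ)..T', B t * max A (v t)) :
    v T ≤ max A (v 0) * Real.exp (∫ t in (0 : ℝ)..T, B t) := by
  have hw0 : ∀ t, 0 ≤ max A (v t) := fun t => hA.trans (le_max_left _ _)
  have hmax_ineq : ∀ t ∈ Icc 0 T,
      max A (v t) ≤ max A (v 0) + ∫ s in (0 : ℝ)..t, B s * max A (v s) := by
    intro t ht
    have hI : 0 ≤ ∫ s in (0 : ℝ)..t, B s * max A (v s) :=
      integral_nonneg ht.1 fun s hs => mul_nonneg (hBnonneg s ⟨hs.1, hs.2.trans ht.2⟩) (hw0 s)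
    exact max_le (by linarith [le_max_left A (v 0)])
      (by linarith [hineq t ht, le_max_right A (v 0)])
  exact (le_max_right A (v T)).trans <| le_mul_exp_integral_of_le_add_integral hT hBint
    hBnonneg (continuousOn_const.sup hcont) (fun t _ => hw0 t) hmax_ineq

theorem linear_gronwall_max (T A : ℝ) (hT : 0 ≤ T) (hA : 0 ≤ A)
    (v B : ℝ → ℝ)
    (hcont : ContinuousOn v (Set.Icc 0 T))
    (hvnonneg : ∀ t ∈ Set.Icc 0 T, 0 ≤ v t)
    (hBnonneg : ∀ t ∈ Set.Icc 0 T, 0 ≤ B t)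
    (hBint : IntervalIntegrable B volume 0 T)
    (hineq : ∀ T' ∈ Set.Icc 0 T,
      v T' ≤ v 0 + ∫ t in (0 : ℝ)..T', B t * max A (v t)) :
    v T ≤ max A (v 0) * Real.exp (∫ t in (0 : ℝ)..T, B t) :=
  linear_gronwall_max_general T A hT hA v B hcont hBnonneg hBint hineq
end
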